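/- Let D be the horizontal-type derivation with marked point z₀ ∈ K and parameters (e, s, d, u), and let E be the horizontal-type derivation with marked point 0, parameters (ẽ, s̃, d̃, ũ) and twist family (w_z)_{z≠0}. Then for every m ∈ ℤⁿ, [D,E](χ^m) = d·d̃·t^{s̃−1}·q^{s−1}·φ^{ẽ}·(C₀ + C₁ + C₂)·χ^{m+e+ẽ}, where q = t − z₀, v_{z₀}(x) = ⟨x,u⟩/d, ṽ₀(x) = ⟨x,ũ⟩/d̃, and C₀ = s̃·ṽ₀(m)·q² − s·v_{z₀}(m)·t² + (ṽ₀(m)·v_{z₀}(ẽ) − v_{z₀}(m)·ṽ₀(e))·t·q, C₁ = ṽ₀(m)·α_{ẽ}·q² − s̃·α_m·q² − v_{z₀}(ẽ)·α_m·t·q + v_{z₀}(m)·α_e·t·q, C₂ = −t·α′_m·q² − α_m·α_{ẽ}·q². -/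

import Mathlib

/-!
Both derivations send a monomial `f·χ^m` to a single monomial, so `[D,E](χ^m)` is the monomial at
`m + e + e'` whose coefficient comes from the Leibniz rule for `d/dt`, the power rules for `t^{s'}`
and `(t - z₀)^s`, and `t·(φ^{e'})′ = α_{e'}·φ^{e'}`. Writing `t^{s'} = t^{s'-1}·t` and
`q^s = q^{s-1}·q`, what remains is an identity of rational functions in these quantities.
-/

noncomputable section

/-- standard pairing `⟨m,v⟩ = Σᵢ mᵢ vᵢ` on `ℤⁿ`. -/
def pairZ {n : ℕ} (m v : Fin n → ℤ) : ℤ := ∑ i, m i * v i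

/-- derivative `f ↦ df/dt` of a rational function `f ∈ K(t)`. -/
def rderiv {K : Type*} [Field K] (φ : RatFunc K) : RatFunc K :=
  (algebraMap (Polynomial K) (RatFunc K) (Polynomial.derivative φ.num)
      * algebraMap (Polynomial K) (RatFunc K) φ.denom
    - algebraMap (Polynomial K) (RatFunc K) φ.num
      * algebraMap (Polynomial K) (RatFunc K) (Polynomial.derivative φ.denom))
    / (algebraMap (Polynomial K) (RatFunc K) φ.denom) ^ 2

/-- twisting family: `φ^m = ∏_{z≠0} (t−z)^{−⟨m,w_z⟩}`, for a finitely
supported family of vectors `w_z ∈ ℤⁿ`. -/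
def phim {K : Type*} [Field K] {n : ℕ} (w : K →₀ (Fin n → ℤ)) (m : Fin n → ℤ) :
    RatFunc K :=
  ∏ z ∈ w.support, (RatFunc.X - RatFunc.C z) ^ (-(pairZ m (w z)))

/-- `α_m = t·(φ^m)′/φ^m = −Σ_{z≠0} ⟨m,w_z⟩·t/(t−z)`. -/
def alpham {K : Type*} [Field K] {n : ℕ} (w : K →₀ (Fin n → ℤ)) (m : Fin n → ℤ) :
    RatFunc K :=
  -∑ z ∈ w.support, (pairZ m (w z) : RatFunc K) * RatFunc.X / (RatFunc.X - RatFunc.C z)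

/-- Horizontal-type derivation `D` with marked point `z₀`, parameters
`(e, s, d, u)` and all other vertices `0`:
`f·χ^m ↦ q^s·(⟨m,u⟩·f + d·q·f′)·χ^{m+e}` with `q = t − z₀`. -/
def DhorPt {K : Type*} [Field K] {n : ℕ} (z₀ : K) (e : Fin n → ℤ) (s d : ℤ)
    (u : Fin n → ℤ) (b : (Fin n → ℤ) →₀ RatFunc K) : (Fin n → ℤ) →₀ RatFunc K :=
  b.sum fun m f => Finsupp.single (m + e)
    ((RatFunc.X - RatFunc.C z₀) ^ s
      * ((pairZ m u : RatFunc K) * f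
        + (d : RatFunc K) * (RatFunc.X - RatFunc.C z₀) * rderiv f))

/-- Horizontal-type derivation `E` with marked point `0`, parameters
`(e', s', d', u')` and twist family `w`:
`f·χ^m ↦ t^{s'}·φ^{e'}·(⟨m,u'⟩·f + d'·(t·f′ − α_m·f))·χ^{m+e'}`. -/
def EhorTw {K : Type*} [Field K] {n : ℕ} (e' : Fin n → ℤ) (s' d' : ℤ)
    (u' : Fin n → ℤ) (w : K →₀ (Fin n → ℤ))
    (b : (Fin n → ℤ) →₀ RatFunc K) : (Fin n → ℤ) →₀ RatFunc K :=
  b.sum fun m f => Finsupp.single (m + e')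
    ((RatFunc.X : RatFunc K) ^ s' * phim w e'
      * ((pairZ m u' : RatFunc K) * f
        + (d' : RatFunc K) * (RatFunc.X * rderiv f - alpham w m * f)))


section RationalDerivative

open Polynomial

variable {K : Type*} [Field K]

local notation "am" => algebraMap K[X] (RatFunc K)

/-- `rderiv` is defined through the reduced fraction `num / denom`; the quotient rule holds for
every representation `p / q`, which is what makes `rderiv` a derivation. -/
theorem rderiv_div (p q : K[X]) (hq : q ≠ 0) :
    rderiv (am p / am q) = (am (derivative p) * am q - am p * am (derivative q)) / am q ^ 2 := by
  set f : RatFunc K := am p / am q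
  have hq' : am q ≠ 0 := RatFunc.algebraMap_ne_zero hq
  have hden : am f.denom ≠ 0 := RatFunc.algebraMap_ne_zero f.denom_ne_zero
  have hcross : f.num * q = p * f.denom := by
    apply RatFunc.algebraMap_injective K
    rw [map_mul, map_mul, ← div_eq_div_iff hden hq', RatFunc.num_div_denom]
  have hcross' : derivative f.num * q + f.num * derivative q
      = derivative p * f.denom + p * derivative f.denom := by
    simpa only [derivative_mul] using congrArg derivative hcross
  have h₀ := congrArg am hcross
  have h₁ := congrArg am hcross'
  simp only [map_mul, map_add] at h₀ h₁
  rw [rderiv, div_eq_div_iff (pow_ne_zero 2 hden) (pow_ne_zero 2 hq')]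
  linear_combination (am q * am f.denom) * h₁
    - (am (derivative f.denom) * am q + am (derivative q) * am f.denom) * h₀

theorem rderiv_algebraMap (p : K[X]) : rderiv (am p) = am (derivative p) := by
  simpa using rderiv_div p 1 one_ne_zero

theorem rderiv_add (f g : RatFunc K) : rderiv (f + g) = rderiv f + rderiv g := by
  induction f using RatFunc.induction_on with | f p q hq =>
  induction g using RatFunc.induction_on with | f r w hw =>
  have hq' : am q ≠ 0 := RatFunc.algebraMap_ne_zero hq
  have hw' : am w ≠ 0 := RatFunc.algebraMap_ne_zero hw
  have h : am p / am q + am r / am w = am (p * w + q * r) / am (q * w) := by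
    rw [map_add, map_mul, map_mul, map_mul, ← div_add_div _ _ hq' hw']
  rw [h, rderiv_div _ _ (mul_ne_zero hq hw), rderiv_div _ _ hq, rderiv_div _ _ hw]
  simp only [derivative_mul, map_add, map_mul]
  field_simp
  ring

theorem rderiv_mul (f g : RatFunc K) : rderiv (f * g) = f * rderiv g + g * rderiv f := by
  induction f using RatFunc.induction_on with | f p q hq =>
  induction g using RatFunc.induction_on with | f r w hw =>
  have hq' : am q ≠ 0 := RatFunc.algebraMap_ne_zero hq
  have hw' : am w ≠ 0 := RatFunc.algebraMap_ne_zero hw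
  have h : am p / am q * (am r / am w) = am (p * r) / am (q * w) := by
    rw [map_mul, map_mul, ← div_mul_div_comm]
  rw [h, rderiv_div _ _ (mul_ne_zero hq hw), rderiv_div _ _ hq, rderiv_div _ _ hw]
  simp only [derivative_mul, map_add, map_mul]
  field_simp
  ring

theorem rderiv_C (c : K) : rderiv (RatFunc.C c) = 0 := by
  simpa [RatFunc.algebraMap_C] using rderiv_algebraMap (C c)

def rderivation : Derivation K (RatFunc K) (RatFunc K) :=
  Derivation.mk'
    { toFun := rderiv
      map_add' := rderiv_add
      map_smul' := fun c f => by simp [RatFunc.smul_eq_C_mul, rderiv_mul, rderiv_C] }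
    rderiv_mul

@[simp]
theorem rderivation_apply (f : RatFunc K) : rderivation f = rderiv f := rfl

theorem rderiv_zero : rderiv (0 : RatFunc K) = 0 :=
  rderivation.map_zero

theorem rderiv_one : rderiv (1 : RatFunc K) = 0 :=
  rderivation.map_one_eq_zero

theorem rderiv_neg (f : RatFunc K) : rderiv (-f) = -rderiv f :=
  rderivation.map_neg f

theorem rderiv_intCast (k : ℤ) : rderiv (k : RatFunc K) = 0 :=
  rderivation.map_intCast k

theorem rderiv_X_sub_C (z : K) : rderiv (RatFunc.X - RatFunc.C z) = 1 := by
  rw [← RatFunc.algebraMap_X, ← RatFunc.algebraMap_C, ← map_sub, rderiv_algebraMap]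
  simp

theorem RatFunc.X_sub_C_ne_zero (z : K) : (RatFunc.X - RatFunc.C z : RatFunc K) ≠ 0 := by
  rw [← RatFunc.algebraMap_X, ← RatFunc.algebraMap_C, ← map_sub]
  exact RatFunc.algebraMap_ne_zero (Polynomial.X_sub_C_ne_zero z)

theorem rderiv_X_sub_C_zpow (z : K) (k : ℤ) :
    rderiv ((RatFunc.X - RatFunc.C z) ^ k)
      = (k : RatFunc K) * (RatFunc.X - RatFunc.C z) ^ (k - 1) := by
  have h := rderivation.leibniz_zpow (RatFunc.X - RatFunc.C z) k
  rwa [rderivation_apply, rderivation_apply, rderiv_X_sub_C, zsmul_eq_mul, smul_eq_mul,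
    mul_one] at h

theorem rderiv_X_zpow (k : ℤ) :
    rderiv ((RatFunc.X : RatFunc K) ^ k) = (k : RatFunc K) * RatFunc.X ^ (k - 1) := by
  simpa using rderiv_X_sub_C_zpow (0 : K) k

theorem rderiv_prod_X_sub_C_zpow (S : Finset K) (ν : K → ℤ) :
    rderiv (∏ z ∈ S, (RatFunc.X - RatFunc.C z) ^ ν z)
      = (∑ z ∈ S, (ν z : RatFunc K) / (RatFunc.X - RatFunc.C z))
        * ∏ z ∈ S, (RatFunc.X - RatFunc.C z) ^ ν z := by
  classical
  induction S using Finset.induction_on with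
  | empty => simp [rderiv_one]
  | insert a S ha ih =>
    have hg := RatFunc.X_sub_C_ne_zero a
    rw [Finset.prod_insert ha, Finset.sum_insert ha, rderiv_mul, ih, rderiv_X_sub_C_zpow,
      zpow_sub_one₀ hg]
    field_simp
    ring

end RationalDerivative

section Twist

variable {K : Type*} [Field K] {n : ℕ}

theorem pairZ_add (m m' v : Fin n → ℤ) : pairZ (m + m') v = pairZ m v + pairZ m' v := by
  simp only [pairZ, Pi.add_apply, add_mul, Finset.sum_add_distrib]

theorem alpham_add (w : K →₀ (Fin n → ℤ)) (m m' : Fin n → ℤ) :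
    alpham w (m + m') = alpham w m + alpham w m' := by
  simp only [alpham, pairZ_add, Int.cast_add, add_mul, add_div, Finset.sum_add_distrib, neg_add]

theorem X_mul_rderiv_phim (w : K →₀ (Fin n → ℤ)) (m : Fin n → ℤ) :
    RatFunc.X * rderiv (phim w m) = alpham w m * phim w m := by
  rw [phim, alpham, rderiv_prod_X_sub_C_zpow, ← mul_assoc, Finset.mul_sum,
    ← Finset.sum_neg_distrib]
  congr 1
  refine Finset.sum_congr rfl fun z _ => ?_
  push_cast
  ring

theorem DhorPt_single (z₀ : K) (e : Fin n → ℤ) (s d : ℤ) (u m : Fin n → ℤ)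
    (f : RatFunc K) :
    DhorPt z₀ e s d u (Finsupp.single m f) = Finsupp.single (m + e)
      ((RatFunc.X - RatFunc.C z₀) ^ s
        * ((pairZ m u : RatFunc K) * f
          + (d : RatFunc K) * (RatFunc.X - RatFunc.C z₀) * rderiv f)) :=
  Finsupp.sum_single_index (by simp [rderiv_zero])

theorem EhorTw_single (e' : Fin n → ℤ) (s' d' : ℤ) (u' : Fin n → ℤ)
    (w : K →₀ (Fin n → ℤ)) (m : Fin n → ℤ) (f : RatFunc K) :
    EhorTw e' s' d' u' w (Finsupp.single m f) = Finsupp.single (m + e')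
      ((RatFunc.X : RatFunc K) ^ s' * phim w e'
        * ((pairZ m u' : RatFunc K) * f
          + (d' : RatFunc K) * (RatFunc.X * rderiv f - alpham w m * f))) :=
  Finsupp.sum_single_index (by simp [rderiv_zero])

end Twist

theorem commutator_horizontal_horizontal_on_chi_general
    {K : Type*} [Field K] [CharZero K] {n : ℕ}
    (z₀ : K) (e : Fin n → ℤ) (s d : ℤ) (hd : 0 < d) (u : Fin n → ℤ)
    (e' : Fin n → ℤ) (s' d' : ℤ) (hd' : 0 < d') (u' : Fin n → ℤ)
    (w : K →₀ (Fin n → ℤ)) (m : Fin n → ℤ) :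
    (DhorPt z₀ e s d u (EhorTw e' s' d' u' w (Finsupp.single m (1 : RatFunc K)))
      - EhorTw e' s' d' u' w (DhorPt z₀ e s d u (Finsupp.single m (1 : RatFunc K))))
    = Finsupp.single (m + e + e')
        ((d : RatFunc K) * (d' : RatFunc K)
          * (RatFunc.X : RatFunc K) ^ (s' - 1) * (RatFunc.X - RatFunc.C z₀) ^ (s - 1)
          * phim w e'
          * (((s' : RatFunc K) * ((pairZ m u' : RatFunc K) / (d' : RatFunc K))
                  * (RatFunc.X - RatFunc.C z₀) ^ (2 : ℕ)
                - (s : RatFunc K) * ((pairZ m u : RatFunc K) / (d : RatFunc K))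
                  * RatFunc.X ^ (2 : ℕ)
                + ((pairZ m u' : RatFunc K) / (d' : RatFunc K)
                      * ((pairZ e' u : RatFunc K) / (d : RatFunc K))
                    - (pairZ m u : RatFunc K) / (d : RatFunc K)
                      * ((pairZ e u' : RatFunc K) / (d' : RatFunc K)))
                  * RatFunc.X * (RatFunc.X - RatFunc.C z₀))
            + ((pairZ m u' : RatFunc K) / (d' : RatFunc K) * alpham w e'
                  * (RatFunc.X - RatFunc.C z₀) ^ (2 : ℕ)
                - (s' : RatFunc K) * alpham w m * (RatFunc.X - RatFunc.C z₀) ^ (2 : ℕ)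
                - (pairZ e' u : RatFunc K) / (d : RatFunc K) * alpham w m
                  * RatFunc.X * (RatFunc.X - RatFunc.C z₀)
                + (pairZ m u : RatFunc K) / (d : RatFunc K) * alpham w e
                  * RatFunc.X * (RatFunc.X - RatFunc.C z₀))
            + (-(RatFunc.X * rderiv (alpham w m)
                  * (RatFunc.X - RatFunc.C z₀) ^ (2 : ℕ))
                - alpham w m * alpham w e'
                  * (RatFunc.X - RatFunc.C z₀) ^ (2 : ℕ)))) := by
  have hX : (RatFunc.X : RatFunc K) ≠ 0 := RatFunc.X_ne_zero
  have hq := RatFunc.X_sub_C_ne_zero z₀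
  have hdK : (d : RatFunc K) ≠ 0 := by exact_mod_cast hd.ne'
  have hd'K : (d' : RatFunc K) ≠ 0 := by exact_mod_cast hd'.ne'
  have hφ : rderiv (phim w e') = alpham w e' * phim w e' / RatFunc.X := by
    rw [eq_div_iff hX, mul_comm, X_mul_rderiv_phim]
  rw [EhorTw_single, DhorPt_single, DhorPt_single, EhorTw_single, add_right_comm m e' e,
    ← Finsupp.single_sub]
  congr 1
  have hXs : (RatFunc.X : RatFunc K) ^ s' = RatFunc.X ^ (s' - 1) * RatFunc.X := by
    rw [zpow_sub_one₀ hX, inv_mul_cancel_right₀ hX]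
  have hqs : (RatFunc.X - RatFunc.C z₀) ^ s
      = (RatFunc.X - RatFunc.C z₀) ^ (s - 1) * (RatFunc.X - RatFunc.C z₀) := by
    rw [zpow_sub_one₀ hq, inv_mul_cancel_right₀ hq]
  simp only [mul_one, mul_zero, zero_sub, add_zero, rderiv_mul, rderiv_add, rderiv_neg,
    rderiv_intCast, rderiv_one, hφ, rderiv_X_zpow, rderiv_X_sub_C_zpow, pairZ_add,
    alpham_add, Int.cast_add]
  rw [hXs, hqs]
  field_simp
  ring

theorem commutator_horizontal_horizontal_on_chi
    {K : Type*} [Field K] [IsAlgClosed K] [CharZero K] {n : ℕ} (hn : 1 ≤ n)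
    (z₀ : K) (e : Fin n → ℤ) (s d : ℤ) (hd : 0 < d) (u : Fin n → ℤ)
    (e' : Fin n → ℤ) (s' d' : ℤ) (hd' : 0 < d') (u' : Fin n → ℤ)
    (w : K →₀ (Fin n → ℤ)) (hw0 : w 0 = 0) (m : Fin n → ℤ) :
    (DhorPt z₀ e s d u (EhorTw e' s' d' u' w (Finsupp.single m (1 : RatFunc K)))
      - EhorTw e' s' d' u' w (DhorPt z₀ e s d u (Finsupp.single m (1 : RatFunc K))))
    = Finsupp.single (m + e + e')
        ((d : RatFunc K) * (d' : RatFunc K)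
          * (RatFunc.X : RatFunc K) ^ (s' - 1) * (RatFunc.X - RatFunc.C z₀) ^ (s - 1)
          * phim w e'
          * (((s' : RatFunc K) * ((pairZ m u' : RatFunc K) / (d' : RatFunc K))
                  * (RatFunc.X - RatFunc.C z₀) ^ (2 : ℕ)
                - (s : RatFunc K) * ((pairZ m u : RatFunc K) / (d : RatFunc K))
                  * RatFunc.X ^ (2 : ℕ)
                + ((pairZ m u' : RatFunc K) / (d' : RatFunc K)
                      * ((pairZ e' u : RatFunc K) / (d : RatFunc K))
                    - (pairZ m u : RatFunc K) / (d : RatFunc K)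
                      * ((pairZ e u' : RatFunc K) / (d' : RatFunc K)))
                  * RatFunc.X * (RatFunc.X - RatFunc.C z₀))
            + ((pairZ m u' : RatFunc K) / (d' : RatFunc K) * alpham w e'
                  * (RatFunc.X - RatFunc.C z₀) ^ (2 : ℕ)
                - (s' : RatFunc K) * alpham w m * (RatFunc.X - RatFunc.C z₀) ^ (2 : ℕ)
                - (pairZ e' u : RatFunc K) / (d : RatFunc K) * alpham w m
                  * RatFunc.X * (RatFunc.X - RatFunc.C z₀)
                + (pairZ m u : RatFunc K) / (d : RatFunc K) * alpham w e
                  * RatFunc.X * (RatFunc.X - RatFunc.C z₀))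
            + (-(RatFunc.X * rderiv (alpham w m)
                  * (RatFunc.X - RatFunc.C z₀) ^ (2 : ℕ))
                - alpham w m * alpham w e'
                  * (RatFunc.X - RatFunc.C z₀) ^ (2 : ℕ)))) :=
  commutator_horizontal_horizontal_on_chi_general z₀ e s d hd u e' s' d' hd' u' w m
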